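/- If F = f + g with f differentiable and convex, g convex, F attains its minimum F* on a set 𝒳*, and F satisfies quadratic growth F(x) − F* ≥ (μ/2)‖x − x_p‖² (x_p the projection of x onto 𝒳*), then for every λ with 0 < λ < μ, D_g(x, λ) ≥ 2λ(1 − λ/μ)(F(x) − F*); in particular D_g(x, μ/2) ≥ (μ/2)(F(x) − F*). -/

import Mathlib

open RealInnerProductSpace

/-- The quantity `D_g(x, λ)` from the proximal-PL inequality. -/
noncomputable def Dg {d : ℕ} (f g : EuclideanSpace ℝ (Fin d) → ℝ)
    (x : EuclideanSpace ℝ (Fin d)) (lam : ℝ) : ℝ :=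
  -2 * lam * ⨅ y : EuclideanSpace ℝ (Fin d),
    (⟪gradient f x, y - x⟫ + lam / 2 * ‖y - x‖ ^ 2 + g y - g x)

/-! Take `y = x_p` in the minimisation defining `D_g(x, λ)`. Convexity of `f` bounds
`⟪∇f(x), x_p - x⟫` by `f(x_p) - f(x)`, and quadratic growth bounds `(λ/2)‖x_p - x‖²` by
`(λ/μ)(F(x) - F*)`, so the minimised quantity is at most `-(1 - λ/μ)(F(x) - F*)`.
The infimum is a genuine one, not the junk value `0`, because a subgradient of `g` gives an
affine minorant, which the quadratic term `(λ/2)‖y - x‖²` dominates. -/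

open Set

section NormedSpace

variable {E : Type*} [NormedAddCommGroup E] [NormedSpace ℝ E] {f : E → ℝ} {s : Set E}
  {x y : E} {f' : E →L[ℝ] ℝ}

theorem ConvexOn.add_apply_sub_le_of_hasFDerivAt (hf : ConvexOn ℝ s f) (hx : x ∈ s)
    (hy : y ∈ s) (hf' : HasFDerivAt f f' x) :
    f x + f' (y - x) ≤ f y := by
  set L : ℝ →ᵃ[ℝ] E := AffineMap.lineMap x y
  have hline : ConvexOn ℝ (L ⁻¹' s) (f ∘ L) := hf.comp_affineMap L
  have hderiv : HasDerivAt (f ∘ L) (f' (y - x)) 0 := by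
    have h : HasFDerivAt f f' (L 0) := by simpa [L] using hf'
    exact h.comp_hasDerivAt 0 AffineMap.hasDerivAt_lineMap
  have := hline.le_slope_of_hasDerivAt (by simpa [L] using hx) (by simpa [L] using hy)
    one_pos hderiv
  simp only [slope_def_field, Function.comp_apply, L, AffineMap.lineMap_apply_one,
    AffineMap.lineMap_apply_zero, sub_zero, div_one] at this
  linarith

theorem ConvexOn.exists_clm_add_apply_sub_le (hf : ConvexOn ℝ univ f) (hfc : Continuous f)
    (x : E) : ∃ φ : E →L[ℝ] ℝ, ∀ y, f x + φ (y - x) ≤ f y := by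
  -- separate `(x, f x)` from the strict epigraph, which is open and convex
  set T : Set (E × ℝ) := {p | f p.1 < p.2}
  have hT : Convex ℝ T := by simpa [T] using hf.convex_strict_epigraph
  have hTopen : IsOpen T := isOpen_lt (hfc.comp continuous_fst) continuous_snd
  obtain ⟨ψ, hψ⟩ :=
    geometric_hahn_banach_point_open hT hTopen (show (x, f x) ∉ T from lt_irrefl (f x))
  set c : ℝ := ψ (0, 1)
  have hψ_apply : ∀ y t, ψ (y, t) = ψ (y, 0) + t * c := fun y t => by
    rw [show ((y, t) : E × ℝ) = (y, 0) + t • (0, 1) by simp, map_add, map_smul, smul_eq_mul]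
  have hc : 0 < c := by
    have := hψ (x, f x + 1) (by simp [T])
    rw [hψ_apply x (f x + 1), hψ_apply x (f x)] at this
    linarith
  refine ⟨-c⁻¹ • ψ.comp (ContinuousLinearMap.inl ℝ E ℝ), fun y => ?_⟩
  have key : ψ (x, 0) + f x * c ≤ ψ (y, 0) + f y * c := by
    refine le_of_forall_pos_lt_add fun ε hε => ?_
    have := hψ (y, f y + ε / c) (by simp [T]; positivity)
    rw [hψ_apply x (f x), hψ_apply y, add_mul, div_mul_cancel₀ _ hc.ne'] at this
    linarith
  have hsub : ψ (y - x, 0) = ψ (y, 0) - ψ (x, 0) := by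
    rw [← map_sub, Prod.mk_sub_mk, sub_zero]
  have hdiv : f x - f y ≤ (ψ (y, 0) - ψ (x, 0)) / c := by
    rw [le_div_iff₀ hc]
    linarith
  change f x + -c⁻¹ * ψ (y - x, 0) ≤ f y
  rw [hsub, neg_mul, ← div_eq_inv_mul]
  linarith

end NormedSpace

section InnerProductSpace

variable {F : Type*} [NormedAddCommGroup F] [InnerProductSpace ℝ F] {f g : F → ℝ}

theorem ConvexOn.add_inner_gradient_sub_le [CompleteSpace F] (hf : ConvexOn ℝ univ f) {x : F}
    (hfx : DifferentiableAt ℝ f x) (y : F) : f x + ⟪gradient f x, y - x⟫ ≤ f y := by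
  rw [inner_gradient_left]
  exact hf.add_apply_sub_le_of_hasFDerivAt (mem_univ x) (mem_univ y) hfx.hasFDerivAt

theorem ConvexOn.bddBelow_range_prox_objective (hg : ConvexOn ℝ univ g) (hgc : Continuous g)
    (v x : F) {lam : ℝ} (hlam : 0 < lam) :
    BddBelow (range fun y => ⟪v, y - x⟫ + lam / 2 * ‖y - x‖ ^ 2 + g y - g x) := by
  obtain ⟨φ, hφ⟩ := hg.exists_clm_add_apply_sub_le hgc x
  set a := ‖v‖ + ‖φ‖
  refine ⟨-a ^ 2 / (2 * lam), ?_⟩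
  rintro _ ⟨y, rfl⟩
  have hv : -(‖v‖ * ‖y - x‖) ≤ ⟪v, y - x⟫ := neg_le_of_abs_le (abs_real_inner_le_norm v _)
  have hφ' : -(‖φ‖ * ‖y - x‖) ≤ g y - g x := by
    have := neg_le_of_abs_le (φ.le_opNorm (y - x))
    linarith [hφ y]
  have hsq : -a ^ 2 / (2 * lam) ≤ lam / 2 * ‖y - x‖ ^ 2 - a * ‖y - x‖ := by
    rw [div_le_iff₀ (by positivity)]
    nlinarith [sq_nonneg (lam * ‖y - x‖ - a)]
  simp only
  linarith

end InnerProductSpace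

theorem le_Dg {d : ℕ} {f g : EuclideanSpace ℝ (Fin d) → ℝ} (hg : ConvexOn ℝ univ g)
    {lam : ℝ} (hlam : 0 < lam) (x y : EuclideanSpace ℝ (Fin d)) :
    -2 * lam * (⟪gradient f x, y - x⟫ + lam / 2 * ‖y - x‖ ^ 2 + g y - g x) ≤ Dg f g x lam := by
  have hgc : Continuous g := continuousOn_univ.mp (hg.continuousOn isOpen_univ)
  exact mul_le_mul_of_nonpos_left
    (ciInf_le (hg.bddBelow_range_prox_objective hgc _ x hlam) y) (by linarith)

theorem le_Dg_of_quadratic_growth {d : ℕ} {f g : EuclideanSpace ℝ (Fin d) → ℝ}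
    {x z : EuclideanSpace ℝ (Fin d)} {μ lam Fstar : ℝ} (hμ : 0 < μ) (hlam : 0 < lam)
    (hfx : DifferentiableAt ℝ f x) (hf : ConvexOn ℝ univ f) (hg : ConvexOn ℝ univ g)
    (hz : f z + g z = Fstar) (hgrowth : μ / 2 * ‖x - z‖ ^ 2 ≤ f x + g x - Fstar) :
    2 * lam * (1 - lam / μ) * (f x + g x - Fstar) ≤ Dg f g x lam := by
  have hgrad := hf.add_inner_gradient_sub_le hfx z
  have hdist : lam / 2 * ‖z - x‖ ^ 2 ≤ lam / μ * (f x + g x - Fstar) := by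
    calc lam / 2 * ‖z - x‖ ^ 2 = lam / μ * (μ / 2 * ‖x - z‖ ^ 2) := by
          rw [norm_sub_rev]; field_simp
      _ ≤ lam / μ * (f x + g x - Fstar) := by gcongr
  have hmodel : ⟪gradient f x, z - x⟫ + lam / 2 * ‖z - x‖ ^ 2 + g z - g x ≤
      -(f x + g x - Fstar) + lam / μ * (f x + g x - Fstar) := by
    linarith
  calc 2 * lam * (1 - lam / μ) * (f x + g x - Fstar)
      = -2 * lam * (-(f x + g x - Fstar) + lam / μ * (f x + g x - Fstar)) := by ring
    _ ≤ -2 * lam * (⟪gradient f x, z - x⟫ + lam / 2 * ‖z - x‖ ^ 2 + g z - g x) :=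
      mul_le_mul_of_nonpos_left hmodel (by linarith)
    _ ≤ Dg f g x lam := le_Dg hg hlam x z

theorem qg_convex_implies_proxPL_general
    {d : ℕ} (f g : EuclideanSpace ℝ (Fin d) → ℝ) (μ Fstar : ℝ) (hμ : 0 < μ)
    (hdiff : Differentiable ℝ f)
    (hfconv : ConvexOn ℝ Set.univ f) (hgconv : ConvexOn ℝ Set.univ g)
    (S : Set (EuclideanSpace ℝ (Fin d)))
    (hFstar : ∀ z ∈ S, f z + g z = Fstar)
    (p : EuclideanSpace ℝ (Fin d) → EuclideanSpace ℝ (Fin d))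
    (hproj : ∀ x, p x ∈ S ∧ ∀ y ∈ S, ‖x - p x‖ ≤ ‖x - y‖)
    (hQG : ∀ x, μ / 2 * ‖x - p x‖ ^ 2 ≤ f x + g x - Fstar) :
    (∀ lam : ℝ, 0 < lam → lam < μ →
        ∀ x, 2 * lam * (1 - lam / μ) * (f x + g x - Fstar) ≤ Dg f g x lam)
      ∧ ∀ x, μ / 2 * (f x + g x - Fstar) ≤ Dg f g x (μ / 2) := by
  have key : ∀ lam : ℝ, 0 < lam → ∀ x,
      2 * lam * (1 - lam / μ) * (f x + g x - Fstar) ≤ Dg f g x lam := fun lam hlam x =>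
    le_Dg_of_quadratic_growth hμ hlam (hdiff x) hfconv hgconv (hFstar _ (hproj x).1) (hQG x)
  refine ⟨fun lam hlam _ => key lam hlam, fun x => ?_⟩
  have hconst : 2 * (μ / 2) * (1 - μ / 2 / μ) = μ / 2 := by
    field_simp
    ring
  simpa only [hconst] using key (μ / 2) (by positivity) x

theorem qg_convex_implies_proxPL
    {d : ℕ} (f g : EuclideanSpace ℝ (Fin d) → ℝ) (μ Fstar : ℝ) (hμ : 0 < μ)
    (hdiff : Differentiable ℝ f)
    (hfconv : ConvexOn ℝ Set.univ f) (hgconv : ConvexOn ℝ Set.univ g)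
    (S : Set (EuclideanSpace ℝ (Fin d)))
    (hS : S = {z | ∀ y, f z + g z ≤ f y + g y}) (hSne : S.Nonempty)
    (hFstar : ∀ z ∈ S, f z + g z = Fstar)
    (p : EuclideanSpace ℝ (Fin d) → EuclideanSpace ℝ (Fin d))
    (hproj : ∀ x, p x ∈ S ∧ ∀ y ∈ S, ‖x - p x‖ ≤ ‖x - y‖)
    (hQG : ∀ x, μ / 2 * ‖x - p x‖ ^ 2 ≤ f x + g x - Fstar) :
    (∀ lam : ℝ, 0 < lam → lam < μ →
        ∀ x, 2 * lam * (1 - lam / μ) * (f x + g x - Fstar) ≤ Dg f g x lam)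
      ∧ ∀ x, μ / 2 * (f x + g x - Fstar) ≤ Dg f g x (μ / 2) :=
  qg_convex_implies_proxPL_general f g μ Fstar hμ hdiff hfconv hgconv S hFstar p hproj hQG
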